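/- For any positive integers k and b with 2b ≥ k, there exists a finite simple graph G with no isolated vertices such that the k-total bondage number of G equals b: b_t^k(G) = b. -/

import Mathlib

/-!
The witnessing graphs are disjoint unions of gadgets on the vertices `p, u, v, q, w 0, …, w (M-1)`:
the path `p - u - v - q`, with or without its middle edge, plus the edges `u - w t` for all `t`
and `v - w t` for `t < j`. The leaves `p` and `q` force `u` and `v` into every total dominating
set, and every other vertex hangs on `u` or `v`, so no deletion of edges that leaves no isolated
vertex pushes `γ_t` of a gadget above `4`. The joined gadget has `γ_t = 2` and reaches `4` exactly
when `uv` is deleted; the unjoined one has `γ_t = 3` and reaches `4` exactly when each of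
`w 0, …, w (j - 1)` has lost an edge, which takes `j` deletions. As `γ_t` is additive over
components, in a union of `a` joined and `r` unjoined gadgets (with parameters `j i`) a gain of
`k = 2a + r` forces every gadget up to `4`, whence `b_t^k = a + ∑ j i`; this covers all `b ≥ k/2`.
-/

open SimpleGraph

/-- A set `S` of vertices is a total dominating set of `G` if every vertex of `G`
is adjacent to at least one vertex of `S`. -/
def IsTotalDominatingSet {V : Type*} (G : SimpleGraph V) (S : Set V) : Prop :=
  ∀ v : V, ∃ u ∈ S, G.Adj v u

/-- The total domination number of `G`: the minimum cardinality of a total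
dominating set of `G`. -/
noncomputable def totalDominationNumber {V : Type*} (G : SimpleGraph V) : ℕ :=
  sInf {n : ℕ | ∃ S : Set V, S.ncard = n ∧ IsTotalDominatingSet G S}

/-- A graph has no isolated vertices if every vertex has a neighbor. -/
def NoIsolatedVerts {V : Type*} (G : SimpleGraph V) : Prop :=
  ∀ v : V, ∃ u : V, G.Adj v u

/-- The `k`-total bondage number of `G`: the minimum cardinality of a set `F` of
edges of `G` such that `G − F` has no isolated vertices and the total domination
number of `G − F` is at least `γ_t(G) + k`. -/
noncomputable def kTotalBondage {V : Type*} (G : SimpleGraph V) (k : ℕ) : ℕ :=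
  sInf {m : ℕ | ∃ F : Set (Sym2 V), F ⊆ G.edgeSet ∧ F.ncard = m ∧
    NoIsolatedVerts (G.deleteEdges F) ∧
    totalDominationNumber G + k ≤ totalDominationNumber (G.deleteEdges F)}

section TotalDomination

variable {V : Type*} {G : SimpleGraph V} {S : Set V}

theorem totalDominationNumber_le_ncard (hS : IsTotalDominatingSet G S) :
    totalDominationNumber G ≤ S.ncard :=
  Nat.sInf_le ⟨S, rfl, hS⟩

theorem NoIsolatedVerts.exists_isTotalDominatingSet_ncard_eq [Finite V]
    (hG : NoIsolatedVerts G) :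
    ∃ S : Set V, IsTotalDominatingSet G S ∧ S.ncard = totalDominationNumber G := by
  obtain ⟨S, hcard, hS⟩ := Nat.sInf_mem (s := {n | ∃ S : Set V, S.ncard = n ∧
    IsTotalDominatingSet G S}) ⟨_, Set.univ, rfl, fun v ↦ (hG v).imp fun u hu ↦ ⟨trivial, hu⟩⟩
  exact ⟨S, hS, hcard⟩

theorem le_totalDominationNumber [Finite V] (hG : NoIsolatedVerts G) {n : ℕ}
    (h : ∀ S, IsTotalDominatingSet G S → n ≤ S.ncard) : n ≤ totalDominationNumber G := by
  obtain ⟨S, hS, hcard⟩ := hG.exists_isTotalDominatingSet_ncard_eq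
  exact hcard ▸ h S hS

theorem IsTotalDominatingSet.mem_of_forall_adj_eq (hS : IsTotalDominatingSet G S) {x u : V}
    (hx : ∀ y, G.Adj x y → y = u) : u ∈ S := by
  obtain ⟨y, hy, hxy⟩ := hS x
  exact hx y hxy ▸ hy

theorem IsTotalDominatingSet.two_le_ncard [Finite V] (hS : IsTotalDominatingSet G S) (x : V) :
    2 ≤ S.ncard := by
  obtain ⟨y, hy, -⟩ := hS x
  obtain ⟨z, hz, hyz⟩ := hS y
  rw [← Set.ncard_pair hyz.ne]
  exact Set.ncard_le_ncard (Set.insert_subset hy (Set.singleton_subset_iff.2 hz))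

theorem IsTotalDominatingSet.three_le_ncard [Finite V] (hS : IsTotalDominatingSet G S)
    {u v : V} (hu : u ∈ S) (hv : v ∈ S) (huv : u ≠ v) (hnadj : ¬G.Adj u v) :
    3 ≤ S.ncard := by
  obtain ⟨x, hx, hux⟩ := hS u
  have hxv : x ≠ v := by rintro rfl; exact hnadj hux
  calc 3 = ({u, v, x} : Set V).ncard := by
        rw [Set.ncard_insert_of_notMem (by simp [huv, hux.ne]), Set.ncard_pair hxv.symm]
    _ ≤ S.ncard := Set.ncard_le_ncard (by simp [Set.insert_subset_iff, hu, hv, hx])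

/-- The neighbours of `u` and `v` in `S` are two further distinct vertices. -/
theorem IsTotalDominatingSet.four_le_ncard [Finite V] (hS : IsTotalDominatingSet G S)
    {u v : V} (hu : u ∈ S) (hv : v ∈ S) (hnadj : ¬G.Adj u v)
    (hcommon : ∀ z, G.Adj u z → ¬G.Adj v z) : 4 ≤ S.ncard := by
  obtain ⟨x, hx, hux⟩ := hS u
  obtain ⟨y, hy, hvy⟩ := hS v
  have huv : u ≠ v := by rintro rfl; exact hcommon x hux hux
  have hxv : x ≠ v := by rintro rfl; exact hnadj hux
  have hyu : y ≠ u := by rintro rfl; exact hnadj hvy.symm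
  have hxy : x ≠ y := by rintro rfl; exact hcommon x hux hvy
  calc 4 = ({u, v, x, y} : Set V).ncard := by
        rw [Set.ncard_insert_of_notMem (by simp [huv, hux.ne, hyu.symm]),
          Set.ncard_insert_of_notMem (by simp [hxv.symm, hvy.ne]), Set.ncard_pair hxy]
    _ ≤ S.ncard := Set.ncard_le_ncard (by simp [Set.insert_subset_iff, hu, hv, hx, hy])

theorem totalDominationNumber_le_of_forall_adj [Finite V] {u v x y : V}
    (hcover : ∀ z, z ≠ u → z ≠ v → G.Adj z u ∨ G.Adj z v) (hux : G.Adj u x) (hvy : G.Adj v y) :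
    totalDominationNumber G ≤ ({u, v, x, y} : Set V).ncard := by
  refine totalDominationNumber_le_ncard fun z ↦ ?_
  by_cases hzu : z = u
  · exact ⟨x, by simp, hzu ▸ hux⟩
  by_cases hzv : z = v
  · exact ⟨y, by simp, hzv ▸ hvy⟩
  rcases hcover z hzu hzv with h | h
  · exact ⟨u, by simp, h⟩
  · exact ⟨v, by simp, h⟩

end TotalDomination

theorem Set.ncard_iUnion_image_of_injective {ι α β : Type*} [Fintype ι] [Finite α]
    {f : ι → α → β} (hf : ∀ i, Function.Injective (f i))
    (hdisj : Pairwise fun i j ↦ Disjoint (Set.range (f i)) (Set.range (f j))) (s : ι → Set α) :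
    (⋃ i, f i '' s i).ncard = ∑ i, (s i).ncard := by
  rw [Set.ncard_iUnion_of_finite (fun i ↦ (s i).toFinite.image _)
    fun i j hij ↦ (hdisj hij).mono (Set.image_subset_range _ _) (Set.image_subset_range _ _),
    finsum_eq_sum_of_fintype]
  exact Finset.sum_congr rfl fun i _ ↦ Set.ncard_image_of_injective _ (hf i)

theorem Sym2.eq_of_map_prodMk_eq {ι W : Type*} {i j : ι} {e e' : Sym2 W}
    (h : Sym2.map (Prod.mk i) e = Sym2.map (Prod.mk j) e') : i = j := by
  induction e using Sym2.ind with | _ x y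
  have : (i, x) ∈ Sym2.map (Prod.mk j) e' := h ▸ Sym2.mem_map.2 ⟨x, Sym2.mem_mk_left x y, rfl⟩
  obtain ⟨y, -, hy⟩ := Sym2.mem_map.1 this
  exact (congrArg Prod.fst hy).symm

theorem Set.ncard_eq_sum_ncard_preimage_prodMk {ι W : Type*} [Fintype ι] [Finite W]
    (S : Set (ι × W)) :
    S.ncard = ∑ i, (Prod.mk i ⁻¹' S).ncard := by
  conv_lhs => rw [show S = ⋃ i, Prod.mk i '' (Prod.mk i ⁻¹' S) by ext ⟨i, x⟩; simp]
  refine Set.ncard_iUnion_image_of_injective (fun i ↦ Prod.mk_right_injective i) ?_ _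
  rintro i j hij
  rw [Set.disjoint_left]
  rintro _ ⟨x, rfl⟩ ⟨y, hy⟩
  exact hij (congrArg Prod.fst hy).symm

theorem Fin.ncard_setOf_val_lt {M j : ℕ} (h : j ≤ M) : {t : Fin M | (t : ℕ) < j}.ncard = j := by
  rw [show {t : Fin M | (t : ℕ) < j} = Set.range (Fin.castLE h) by
    ext t; exact ⟨fun ht ↦ ⟨⟨t, ht⟩, rfl⟩, by rintro ⟨s, rfl⟩; exact s.isLt⟩,
    Set.ncard_range_of_injective (Fin.castLE_injective h), Nat.card_eq_fintype_card,
    Fintype.card_fin]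

namespace SimpleGraph

variable {ι W : Type*}

def disjointUnion (C : ι → SimpleGraph W) : SimpleGraph (ι × W) where
  Adj x y := x.1 = y.1 ∧ (C x.1).Adj x.2 y.2
  symm := ⟨fun _ _ ⟨h, hadj⟩ ↦ ⟨h.symm, h ▸ hadj.symm⟩⟩
  loopless := ⟨fun x h ↦ (C x.1).irrefl h.2⟩

variable (C : ι → SimpleGraph W)

@[simp]
theorem disjointUnion_adj {i j : ι} {x y : W} :
    (disjointUnion C).Adj (i, x) (j, y) ↔ i = j ∧ (C i).Adj x y := Iff.rfl

theorem isTotalDominatingSet_disjointUnion_iff {S : Set (ι × W)} :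
    IsTotalDominatingSet (disjointUnion C) S ↔
      ∀ i, IsTotalDominatingSet (C i) (Prod.mk i ⁻¹' S) := by
  refine ⟨fun h i x ↦ ?_, fun h ⟨i, x⟩ ↦ ?_⟩
  · obtain ⟨⟨_, y⟩, hy, rfl, hxy⟩ := h (i, x)
    exact ⟨y, hy, hxy⟩
  · obtain ⟨y, hy, hxy⟩ := h i x
    exact ⟨(i, y), hy, rfl, hxy⟩

theorem noIsolatedVerts_disjointUnion_iff :
    NoIsolatedVerts (disjointUnion C) ↔ ∀ i, NoIsolatedVerts (C i) := by
  refine ⟨fun h i x ↦ ?_, fun h ⟨i, x⟩ ↦ ?_⟩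
  · obtain ⟨⟨_, y⟩, rfl, hxy⟩ := h (i, x)
    exact ⟨y, hxy⟩
  · obtain ⟨y, hxy⟩ := h i x
    exact ⟨(i, y), rfl, hxy⟩

theorem disjointUnion_deleteEdges (F : Set (Sym2 (ι × W))) :
    (disjointUnion C).deleteEdges F =
      disjointUnion fun i ↦ (C i).deleteEdges (Sym2.map (Prod.mk i) ⁻¹' F) := by
  ext ⟨i, x⟩ ⟨j, y⟩
  simp only [deleteEdges_adj, disjointUnion_adj, Set.mem_preimage, Sym2.map_mk]
  constructor
  · rintro ⟨⟨rfl, h⟩, hF⟩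
    exact ⟨rfl, h, hF⟩
  · rintro ⟨rfl, h, hF⟩
    exact ⟨⟨rfl, h⟩, hF⟩

theorem totalDominationNumber_disjointUnion [Fintype ι] [Finite W]
    (hC : ∀ i, NoIsolatedVerts (C i)) :
    totalDominationNumber (disjointUnion C) = ∑ i, totalDominationNumber (C i) := by
  apply le_antisymm
  · choose T hT hcard using fun i ↦ (hC i).exists_isTotalDominatingSet_ncard_eq
    let S : Set (ι × W) := {x | x.2 ∈ T x.1}
    calc totalDominationNumber (disjointUnion C) ≤ S.ncard :=
          totalDominationNumber_le_ncard ((isTotalDominatingSet_disjointUnion_iff C).2 hT)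
      _ = ∑ i, totalDominationNumber (C i) := by
          rw [Set.ncard_eq_sum_ncard_preimage_prodMk]
          exact Finset.sum_congr rfl fun i _ ↦ hcard i
  · refine le_totalDominationNumber ((noIsolatedVerts_disjointUnion_iff C).2 hC) fun S hS ↦ ?_
    rw [Set.ncard_eq_sum_ncard_preimage_prodMk]
    exact Finset.sum_le_sum fun i _ ↦
      totalDominationNumber_le_ncard ((isTotalDominatingSet_disjointUnion_iff C).1 hS i)

def liftEdges (F : ι → Set (Sym2 W)) : Set (Sym2 (ι × W)) :=
  ⋃ i, Sym2.map (Prod.mk i) '' F i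

theorem preimage_liftEdges (F : ι → Set (Sym2 W)) (i : ι) :
    Sym2.map (Prod.mk i) ⁻¹' liftEdges F = F i := by
  ext e
  simp only [liftEdges, Set.mem_preimage, Set.mem_iUnion, Set.mem_image]
  refine ⟨fun ⟨j, e', he', h⟩ ↦ ?_, fun he ↦ ⟨i, e, he, rfl⟩⟩
  obtain rfl := Sym2.eq_of_map_prodMk_eq h
  rwa [← Sym2.map.injective (Prod.mk_right_injective j) h]

theorem ncard_liftEdges [Fintype ι] [Finite W] (F : ι → Set (Sym2 W)) :
    (liftEdges F).ncard = ∑ i, (F i).ncard := by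
  refine Set.ncard_iUnion_image_of_injective
    (fun i ↦ Sym2.map.injective (Prod.mk_right_injective i)) ?_ F
  rintro i j hij
  rw [Set.disjoint_left]
  rintro _ ⟨e, rfl⟩ ⟨e', he'⟩
  exact hij (Sym2.eq_of_map_prodMk_eq he').symm

theorem liftEdges_subset_edgeSet {F : ι → Set (Sym2 W)} (hF : ∀ i, F i ⊆ (C i).edgeSet) :
    liftEdges F ⊆ (disjointUnion C).edgeSet := by
  rintro _ ⟨_, ⟨i, rfl⟩, e, he, rfl⟩
  induction e using Sym2.ind with | _ x y
  exact ⟨rfl, hF i he⟩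

section Bondage

variable [Fintype ι] [Finite W] {m cost : ι → ℕ} {k : ℕ}

theorem exists_deleteEdges_disjointUnion (hC : ∀ i, NoIsolatedVerts (C i))
    (hattain : ∀ i, ∃ F ⊆ (C i).edgeSet, F.ncard = cost i ∧
      NoIsolatedVerts ((C i).deleteEdges F) ∧ m i ≤ totalDominationNumber ((C i).deleteEdges F))
    (hk : ∑ i, totalDominationNumber (C i) + k = ∑ i, m i) :
    ∃ F ⊆ (disjointUnion C).edgeSet, F.ncard = ∑ i, cost i ∧
      NoIsolatedVerts ((disjointUnion C).deleteEdges F) ∧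
      totalDominationNumber (disjointUnion C) + k ≤
        totalDominationNumber ((disjointUnion C).deleteEdges F) := by
  choose F hsub hcard hiso htdn using hattain
  have hdel : (disjointUnion C).deleteEdges (liftEdges F) =
      disjointUnion fun i ↦ (C i).deleteEdges (F i) := by
    simp only [disjointUnion_deleteEdges, preimage_liftEdges]
  refine ⟨liftEdges F, liftEdges_subset_edgeSet C hsub, by simp only [ncard_liftEdges, hcard],
    ?_, ?_⟩
  · rw [hdel]
    exact (noIsolatedVerts_disjointUnion_iff _).2 hiso
  · rw [hdel, totalDominationNumber_disjointUnion C hC, totalDominationNumber_disjointUnion _ hiso,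
      hk]
    exact Finset.sum_le_sum fun i _ ↦ htdn i

/-- Since no component can exceed `m i`, the gain `k` forces every component to reach `m i`,
which costs at least `cost i` edges in each. -/
theorem sum_le_ncard_of_deleteEdges_disjointUnion (hC : ∀ i, NoIsolatedVerts (C i))
    (hle : ∀ i F, NoIsolatedVerts ((C i).deleteEdges F) →
      totalDominationNumber ((C i).deleteEdges F) ≤ m i)
    (hcost : ∀ i F, NoIsolatedVerts ((C i).deleteEdges F) →
      m i ≤ totalDominationNumber ((C i).deleteEdges F) → cost i ≤ F.ncard)
    (hk : ∑ i, totalDominationNumber (C i) + k = ∑ i, m i) {F : Set (Sym2 (ι × W))}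
    (hF : NoIsolatedVerts ((disjointUnion C).deleteEdges F))
    (htdn : totalDominationNumber (disjointUnion C) + k ≤
      totalDominationNumber ((disjointUnion C).deleteEdges F)) :
    ∑ i, cost i ≤ F.ncard := by
  set Fi : ι → Set (Sym2 W) := fun i ↦ Sym2.map (Prod.mk i) ⁻¹' F
  rw [disjointUnion_deleteEdges] at hF htdn
  have hiso := (noIsolatedVerts_disjointUnion_iff _).1 hF
  rw [totalDominationNumber_disjointUnion C hC, totalDominationNumber_disjointUnion _ hiso,
    hk] at htdn
  have heq : ∀ i, totalDominationNumber ((C i).deleteEdges (Fi i)) = m i := fun i ↦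
    (Finset.sum_eq_sum_iff_of_le fun i _ ↦ hle i _ (hiso i)).1
      (le_antisymm (Finset.sum_le_sum fun i _ ↦ hle i _ (hiso i)) htdn) i (Finset.mem_univ i)
  calc ∑ i, cost i ≤ ∑ i, (Fi i).ncard :=
        Finset.sum_le_sum fun i _ ↦ hcost i _ (hiso i) (heq i).ge
    _ = (liftEdges Fi).ncard := (ncard_liftEdges Fi).symm
    _ ≤ F.ncard := Set.ncard_le_ncard (by rintro _ ⟨_, ⟨i, rfl⟩, e, he, rfl⟩; exact he)

theorem kTotalBondage_disjointUnion (hC : ∀ i, NoIsolatedVerts (C i))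
    (hle : ∀ i F, NoIsolatedVerts ((C i).deleteEdges F) →
      totalDominationNumber ((C i).deleteEdges F) ≤ m i)
    (hcost : ∀ i F, NoIsolatedVerts ((C i).deleteEdges F) →
      m i ≤ totalDominationNumber ((C i).deleteEdges F) → cost i ≤ F.ncard)
    (hattain : ∀ i, ∃ F ⊆ (C i).edgeSet, F.ncard = cost i ∧
      NoIsolatedVerts ((C i).deleteEdges F) ∧ m i ≤ totalDominationNumber ((C i).deleteEdges F))
    (hk : ∑ i, totalDominationNumber (C i) + k = ∑ i, m i) :
    kTotalBondage (disjointUnion C) k = ∑ i, cost i :=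
  IsLeast.csInf_eq ⟨exists_deleteEdges_disjointUnion C hC hattain hk,
    fun _ ⟨_, _, hcard, hF, htdn⟩ ↦
      hcard ▸ sum_le_ncard_of_deleteEdges_disjointUnion C hC hle hcost hk hF htdn⟩

end Bondage

end SimpleGraph

inductive GadgetVertex (M : ℕ)
  | u | v | p | q
  | w (t : Fin M)
  deriving Fintype

open GadgetVertex in
def gadgetRel {M : ℕ} (joined : Bool) (j : ℕ) : GadgetVertex M → GadgetVertex M → Prop
  | u, p | v, q | u, w _ => True
  | u, v => joined
  | v, w t => t < j
  | _, _ => False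

def gadget (joined : Bool) (j M : ℕ) : SimpleGraph (GadgetVertex M) where
  Adj x y := gadgetRel joined j x y ∨ gadgetRel joined j y x
  symm := ⟨fun _ _ ↦ Or.symm⟩
  loopless := ⟨fun x h ↦ by cases x <;> simp [gadgetRel] at h⟩

namespace gadget

open GadgetVertex

variable {joined : Bool} {j M : ℕ} {F : Set (Sym2 (GadgetVertex M))}

theorem adj_u_p : (gadget joined j M).Adj u p := .inl trivial
theorem adj_v_q : (gadget joined j M).Adj v q := .inl trivial
theorem adj_u_w (t : Fin M) : (gadget joined j M).Adj u (w t) := .inl trivial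

theorem adj_u_v : (gadget true j M).Adj u v := .inl rfl

theorem adj_v_w {t : Fin M} (ht : (t : ℕ) < j) : (gadget joined j M).Adj v (w t) := .inl ht

theorem not_adj_u_v : ¬(gadget false j M).Adj u v := by simp [gadget, gadgetRel]

theorem noIsolatedVerts : NoIsolatedVerts (gadget joined j M) := by
  rintro (_ | _ | _ | _ | t)
  exacts [⟨p, adj_u_p⟩, ⟨q, adj_v_q⟩, ⟨u, adj_u_p.symm⟩, ⟨v, adj_v_q.symm⟩, ⟨u, (adj_u_w t).symm⟩]

theorem eq_u_of_adj_p {y : GadgetVertex M} (h : (gadget joined j M).Adj p y) : y = u := by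
  cases y <;> simp_all [gadget, gadgetRel]

theorem eq_v_of_adj_q {y : GadgetVertex M} (h : (gadget joined j M).Adj q y) : y = v := by
  cases y <;> simp_all [gadget, gadgetRel]

theorem eq_u_or_v_of_adj {x y : GadgetVertex M} (hxu : x ≠ u) (hxv : x ≠ v)
    (h : (gadget joined j M).Adj x y) : y = u ∨ y = v := by
  cases x <;> cases y <;> simp_all [gadget, gadgetRel]

theorem eq_q_or_u_of_adj_v {y : GadgetVertex M} (h : (gadget joined 0 M).Adj v y) :
    y = q ∨ y = u := by
  cases y <;> simp_all [gadget, gadgetRel]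

theorem exists_w_of_adj_u_of_adj_v {z : GadgetVertex M} (hu : (gadget false j M).Adj u z)
    (hv : (gadget false j M).Adj v z) : ∃ t : Fin M, (t : ℕ) < j ∧ z = w t := by
  cases z <;> simp_all [gadget, gadgetRel]

theorem mem_of_isTotalDominatingSet {S : Set (GadgetVertex M)}
    (hS : IsTotalDominatingSet ((gadget joined j M).deleteEdges F) S) : u ∈ S ∧ v ∈ S :=
  ⟨hS.mem_of_forall_adj_eq (x := p) fun _ h ↦ eq_u_of_adj_p (deleteEdges_adj.1 h).1,
    hS.mem_of_forall_adj_eq (x := q) fun _ h ↦ eq_v_of_adj_q (deleteEdges_adj.1 h).1⟩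

theorem adj_u_or_adj_v (hF : NoIsolatedVerts ((gadget joined j M).deleteEdges F))
    (z : GadgetVertex M) (hzu : z ≠ u) (hzv : z ≠ v) :
    ((gadget joined j M).deleteEdges F).Adj z u ∨ ((gadget joined j M).deleteEdges F).Adj z v := by
  obtain ⟨y, hy⟩ := hF z
  rcases eq_u_or_v_of_adj hzu hzv (deleteEdges_adj.1 hy).1 with rfl | rfl
  exacts [.inl hy, .inr hy]

theorem totalDominationNumber_le_four
    (hF : NoIsolatedVerts ((gadget joined j M).deleteEdges F)) :
    totalDominationNumber ((gadget joined j M).deleteEdges F) ≤ 4 := by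
  obtain ⟨x, hx⟩ := hF u
  obtain ⟨y, hy⟩ := hF v
  grw [totalDominationNumber_le_of_forall_adj (adj_u_or_adj_v hF) hx hy, Set.ncard_insert_le,
    Set.ncard_insert_le, Set.ncard_insert_le, Set.ncard_singleton]

theorem four_le_totalDominationNumber (hF : NoIsolatedVerts ((gadget joined j M).deleteEdges F))
    (huv : ¬((gadget joined j M).deleteEdges F).Adj u v)
    (hcommon : ∀ z, ((gadget joined j M).deleteEdges F).Adj u z →
      ¬((gadget joined j M).deleteEdges F).Adj v z) :
    4 ≤ totalDominationNumber ((gadget joined j M).deleteEdges F) :=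
  le_totalDominationNumber hF fun _ hS ↦
    hS.four_le_ncard (mem_of_isTotalDominatingSet hS).1 (mem_of_isTotalDominatingSet hS).2 huv
      hcommon

theorem totalDominationNumber_le_two (hF : NoIsolatedVerts ((gadget true j M).deleteEdges F))
    (huv : s(u, v) ∉ F) : totalDominationNumber ((gadget true j M).deleteEdges F) ≤ 2 := by
  have h : ((gadget true j M).deleteEdges F).Adj u v := deleteEdges_adj.2 ⟨adj_u_v, huv⟩
  grw [totalDominationNumber_le_of_forall_adj (adj_u_or_adj_v hF) h h.symm]
  simp

theorem totalDominationNumber_joined : totalDominationNumber (gadget true j M) = 2 := by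
  refine le_antisymm ?_ (le_totalDominationNumber noIsolatedVerts fun _ hS ↦ hS.two_le_ncard u)
  simpa using totalDominationNumber_le_two (F := ∅) (by simpa using noIsolatedVerts)
    (Set.notMem_empty _)

theorem four_le_totalDominationNumber_of_mem
    (hF : NoIsolatedVerts ((gadget true 0 M).deleteEdges F)) (huv : s(u, v) ∈ F) :
    4 ≤ totalDominationNumber ((gadget true 0 M).deleteEdges F) := by
  refine four_le_totalDominationNumber hF (fun h ↦ (deleteEdges_adj.1 h).2 huv) fun z hu hv ↦ ?_
  rcases eq_q_or_u_of_adj_v (deleteEdges_adj.1 hv).1 with rfl | rfl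
  · nomatch eq_v_of_adj_q (deleteEdges_adj.1 hu).1.symm
  · exact hu.ne rfl

theorem one_le_ncard_of_four_le (hF : NoIsolatedVerts ((gadget true 0 M).deleteEdges F))
    (h : 4 ≤ totalDominationNumber ((gadget true 0 M).deleteEdges F)) : 1 ≤ F.ncard := by
  by_cases huv : s(u, v) ∈ F
  · exact (Set.ncard_pos).2 ⟨_, huv⟩
  · have := totalDominationNumber_le_two hF huv
    omega

theorem exists_deleteEdges_joined : ∃ F ⊆ (gadget true 0 M).edgeSet, F.ncard = 1 ∧
    NoIsolatedVerts ((gadget true 0 M).deleteEdges F) ∧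
    4 ≤ totalDominationNumber ((gadget true 0 M).deleteEdges F) := by
  have hF : NoIsolatedVerts ((gadget true 0 M).deleteEdges {s(u, v)}) := by
    rintro (_ | _ | _ | _ | t)
    exacts [⟨p, deleteEdges_adj.2 ⟨adj_u_p, by simp⟩⟩, ⟨q, deleteEdges_adj.2 ⟨adj_v_q, by simp⟩⟩,
      ⟨u, deleteEdges_adj.2 ⟨adj_u_p.symm, by simp⟩⟩,
      ⟨v, deleteEdges_adj.2 ⟨adj_v_q.symm, by simp⟩⟩,
      ⟨u, deleteEdges_adj.2 ⟨(adj_u_w t).symm, by simp⟩⟩]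
  exact ⟨{s(u, v)}, Set.singleton_subset_iff.2 adj_u_v, Set.ncard_singleton _, hF,
    four_le_totalDominationNumber_of_mem hF rfl⟩

theorem totalDominationNumber_le_three
    (hF : NoIsolatedVerts ((gadget joined j M).deleteEdges F))
    {t : Fin M} (ht : (t : ℕ) < j) (hu : s(u, w t) ∉ F) (hv : s(v, w t) ∉ F) :
    totalDominationNumber ((gadget joined j M).deleteEdges F) ≤ 3 := by
  grw [totalDominationNumber_le_of_forall_adj (adj_u_or_adj_v hF)
    (deleteEdges_adj.2 ⟨adj_u_w t, hu⟩) (deleteEdges_adj.2 ⟨adj_v_w ht, hv⟩),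
    Set.pair_eq_singleton, Set.ncard_insert_le, Set.ncard_insert_le, Set.ncard_singleton]

theorem three_le_totalDominationNumber
    (hF : NoIsolatedVerts ((gadget false j M).deleteEdges F)) :
    3 ≤ totalDominationNumber ((gadget false j M).deleteEdges F) :=
  le_totalDominationNumber hF fun _ hS ↦
    hS.three_le_ncard (mem_of_isTotalDominatingSet hS).1 (mem_of_isTotalDominatingSet hS).2
      (by simp) fun h ↦ not_adj_u_v (deleteEdges_adj.1 h).1

theorem totalDominationNumber_unjoined (hj : 0 < j) (hjM : j ≤ M) :
    totalDominationNumber (gadget false j M) = 3 := by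
  have hF : NoIsolatedVerts ((gadget false j M).deleteEdges ∅) := by simpa using noIsolatedVerts
  refine le_antisymm ?_ (by simpa using three_le_totalDominationNumber hF)
  simpa using totalDominationNumber_le_three hF (t := ⟨0, hj.trans_le hjM⟩) hj
    (Set.notMem_empty _) (Set.notMem_empty _)

theorem four_le_totalDominationNumber_of_forall
    (hF : NoIsolatedVerts ((gadget false j M).deleteEdges F))
    (hcut : ∀ t : Fin M, (t : ℕ) < j → s(u, w t) ∈ F ∨ s(v, w t) ∈ F) :
    4 ≤ totalDominationNumber ((gadget false j M).deleteEdges F) := by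
  refine four_le_totalDominationNumber hF (fun h ↦ not_adj_u_v (deleteEdges_adj.1 h).1)
    fun z hu hv ↦ ?_
  obtain ⟨t, ht, rfl⟩ :=
    exists_w_of_adj_u_of_adj_v (deleteEdges_adj.1 hu).1 (deleteEdges_adj.1 hv).1
  exact (hcut t ht).elim (deleteEdges_adj.1 hu).2 (deleteEdges_adj.1 hv).2

/-- Every active `w t` has lost one of its two edges, and these edges are distinct. -/
theorem le_ncard_of_four_le (hjM : j ≤ M)
    (hF : NoIsolatedVerts ((gadget false j M).deleteEdges F))
    (h : 4 ≤ totalDominationNumber ((gadget false j M).deleteEdges F)) : j ≤ F.ncard := by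
  have hcut (t : Fin M) (ht : (t : ℕ) < j) : s(u, w t) ∈ F ∨ s(v, w t) ∈ F := by
    by_contra! hnot
    have := totalDominationNumber_le_three hF ht hnot.1 hnot.2
    omega
  classical
  let f (t : Fin M) : Sym2 (GadgetVertex M) := s(if s(u, w t) ∈ F then u else v, w t)
  rw [← Fin.ncard_setOf_val_lt hjM]
  refine Set.ncard_le_ncard_of_injOn f (fun t ht ↦ ?_) (fun t₁ _ t₂ _ h ↦ ?_)
  · dsimp only [f]
    split_ifs with hu
    exacts [hu, (hcut t ht).resolve_left hu]
  · have : w t₁ ∈ f t₂ := h ▸ Sym2.mem_mk_right _ _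
    simp only [f, Sym2.mem_iff] at this
    split_ifs at this <;> simpa using this

theorem exists_deleteEdges_unjoined (hjM : j ≤ M) : ∃ F ⊆ (gadget false j M).edgeSet,
    F.ncard = j ∧ NoIsolatedVerts ((gadget false j M).deleteEdges F) ∧
    4 ≤ totalDominationNumber ((gadget false j M).deleteEdges F) := by
  let F := (fun t ↦ s(u, w t)) '' {t : Fin M | (t : ℕ) < j}
  have hF : NoIsolatedVerts ((gadget false j M).deleteEdges F) := by
    rintro (_ | _ | _ | _ | t)
    · exact ⟨p, deleteEdges_adj.2 ⟨adj_u_p, by simp [F]⟩⟩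
    · exact ⟨q, deleteEdges_adj.2 ⟨adj_v_q, by simp [F]⟩⟩
    · exact ⟨u, deleteEdges_adj.2 ⟨adj_u_p.symm, by simp [F]⟩⟩
    · exact ⟨v, deleteEdges_adj.2 ⟨adj_v_q.symm, by simp [F]⟩⟩
    · by_cases ht : (t : ℕ) < j
      · exact ⟨v, deleteEdges_adj.2 ⟨(adj_v_w ht).symm, by simp [F]⟩⟩
      · exact ⟨u, deleteEdges_adj.2 ⟨(adj_u_w t).symm, by simp [F, ht]⟩⟩
  refine ⟨F, ?_, ?_, hF, four_le_totalDominationNumber_of_forall hF fun t ht ↦ .inl ⟨t, ht, rfl⟩⟩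
  · rintro _ ⟨t, -, rfl⟩
    exact adj_u_w t
  · rw [Set.ncard_image_of_injective _ fun t₁ t₂ h ↦ by simpa using h, Fin.ncard_setOf_val_lt hjM]

end gadget

theorem exists_graph_kTotalBondage_eq_add_sum (a r : ℕ) (j : Fin r → ℕ) (hj : ∀ i, 0 < j i) :
    ∃ (V : Type) (_ : Fintype V) (G : SimpleGraph V),
      NoIsolatedVerts G ∧
      (∃ F : Set (Sym2 V), F ⊆ G.edgeSet ∧
        NoIsolatedVerts (G.deleteEdges F) ∧
        totalDominationNumber G + (2 * a + r) ≤ totalDominationNumber (G.deleteEdges F)) ∧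
      kTotalBondage G (2 * a + r) = a + ∑ i, j i := by
  -- the gadgets share one vertex type, so any common bound `M` for the `j i` will do
  set M := ∑ i, j i
  have hjM (i : Fin r) : j i ≤ M :=
    Finset.single_le_sum (fun _ _ ↦ Nat.zero_le _) (Finset.mem_univ i)
  let C : Fin a ⊕ Fin r → SimpleGraph (GadgetVertex M) :=
    Sum.elim (fun _ ↦ gadget true 0 M) fun i ↦ gadget false (j i) M
  have hC (c) : NoIsolatedVerts (C c) := by cases c <;> exact gadget.noIsolatedVerts
  have hle (c) (F) (hF : NoIsolatedVerts ((C c).deleteEdges F)) :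
      totalDominationNumber ((C c).deleteEdges F) ≤ 4 := by
    cases c <;> exact gadget.totalDominationNumber_le_four hF
  have hcost (c) (F) (hF : NoIsolatedVerts ((C c).deleteEdges F))
      (h : 4 ≤ totalDominationNumber ((C c).deleteEdges F)) :
      Sum.elim (fun _ ↦ 1) j c ≤ F.ncard := by
    cases c
    exacts [gadget.one_le_ncard_of_four_le hF h, gadget.le_ncard_of_four_le (hjM _) hF h]
  have hattain (c) : ∃ F ⊆ (C c).edgeSet, F.ncard = Sum.elim (fun _ ↦ 1) j c ∧
      NoIsolatedVerts ((C c).deleteEdges F) ∧ 4 ≤ totalDominationNumber ((C c).deleteEdges F) := by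
    cases c
    exacts [gadget.exists_deleteEdges_joined, gadget.exists_deleteEdges_unjoined (hjM _)]
  have hk : ∑ c, totalDominationNumber (C c) + (2 * a + r) = ∑ _c : Fin a ⊕ Fin r, 4 := by
    simp only [C, Fintype.sum_sum_type, Sum.elim_inl, Sum.elim_inr,
      gadget.totalDominationNumber_joined, gadget.totalDominationNumber_unjoined (hj _) (hjM _),
      Finset.sum_const, Finset.card_univ, Fintype.card_fin, smul_eq_mul, Fintype.card_sum]
    ring
  refine ⟨_, inferInstance, disjointUnion C, (noIsolatedVerts_disjointUnion_iff C).2 hC, ?_, ?_⟩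
  · obtain ⟨F, hsub, -, hF, htdn⟩ := exists_deleteEdges_disjointUnion C hC hattain hk
    exact ⟨F, hsub, hF, htdn⟩
  · simp [kTotalBondage_disjointUnion C hC hle hcost hattain hk, Fintype.sum_sum_type, M]

theorem exists_graph_kTotalBondage_eq_general (k b : ℕ) (hk : 1 ≤ k)
    (hkb : k ≤ 2 * b) :
    ∃ (V : Type) (_ : Fintype V) (G : SimpleGraph V),
      NoIsolatedVerts G ∧
      (∃ F : Set (Sym2 V), F ⊆ G.edgeSet ∧
        NoIsolatedVerts (G.deleteEdges F) ∧
        totalDominationNumber G + k ≤ totalDominationNumber (G.deleteEdges F)) ∧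
      kTotalBondage G k = b := by
  obtain ⟨a, r, j, hj, rfl, rfl⟩ :
      ∃ a r, ∃ j : Fin r → ℕ, (∀ i, 0 < j i) ∧ 2 * a + r = k ∧ a + ∑ i, j i = b := by
    rcases lt_or_ge b k with hbk | hbk
    · refine ⟨k - b, 2 * b - k, fun _ ↦ 1, fun _ ↦ one_pos, by omega, ?_⟩
      simp only [Finset.sum_const, Finset.card_univ, Fintype.card_fin, smul_eq_mul, mul_one]
      omega
    · obtain ⟨k, rfl⟩ : ∃ k', k = k' + 1 := ⟨k - 1, by omega⟩
      refine ⟨0, k + 1, Fin.cons (b - k) fun _ ↦ 1,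
        Fin.cases (by simp only [Fin.cons_zero]; omega) fun _ ↦ one_pos, by omega, ?_⟩
      simp only [Fin.sum_cons, Finset.sum_const, Finset.card_univ, Fintype.card_fin, smul_eq_mul,
        mul_one]
      omega
  exact exists_graph_kTotalBondage_eq_add_sum a r j hj

/-- For any positive integers `k` and `b` with `b ≥ k/2`, there exists a finite
graph with no isolated vertices whose `k`-total bondage number equals `b`. -/
theorem exists_graph_kTotalBondage_eq (k b : ℕ) (hk : 1 ≤ k) (hb : 1 ≤ b)
    (hkb : k ≤ 2 * b) :
    ∃ (V : Type) (_ : Fintype V) (G : SimpleGraph V),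
      NoIsolatedVerts G ∧
      (∃ F : Set (Sym2 V), F ⊆ G.edgeSet ∧
        NoIsolatedVerts (G.deleteEdges F) ∧
        totalDominationNumber G + k ≤ totalDominationNumber (G.deleteEdges F)) ∧
      kTotalBondage G k = b :=
  exists_graph_kTotalBondage_eq_general k b hk hkb
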